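/- arXiv:2407.03571 — 3 statements merged into one kernel-verified Lean document; each statement's English description precedes it below -/
import Mathlib

section
/- Let G : E → E be a strongly monotone operator with modulus μ > 0 on a real inner product space E, and let a, b ∈ E be the respective zeros of G and of z ↦ G(z) + μ(z - p) for some point p. Then ‖a - b‖² + ‖p - b‖² ≤ ‖p - a‖², and in particular ‖p - b‖ ≤ ‖p - a‖. -/
open RealInnerProductSpace

theorem regularized_zeros
    {E : Type*} [NormedAddCommGroup E] [InnerProductSpace ℝ E]
    (G : E → E) (μ : ℝ) (hμ : 0 < μ)
    (hsmono : ∀ u v, μ * ‖u - v‖^2 ≤ ⟪G u - G v, u - v⟫)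
    (p a b : E) (ha : G a = 0) (hb : G b + μ • (b - p) = 0) :
    ‖a - b‖^2 + ‖p - b‖^2 ≤ ‖p - a‖^2 ∧ ‖p - b‖ ≤ ‖p - a‖ := by
  have hGb : G b = μ • (p - b) := by
    have := hb
    rw [add_eq_zero_iff_eq_neg] at this
    rw [this, ← smul_neg, neg_sub]
  have h1 := hsmono a b
  rw [ha, hGb, zero_sub, inner_neg_left, real_inner_smul_left] at h1
  -- h1 : μ * ‖a - b‖^2 ≤ -(μ * ⟪p - b, a - b⟫)
  have hkey : ‖a - b‖^2 ≤ ⟪b - p, a - b⟫ := by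
    have h2 : ⟪b - p, a - b⟫ = -⟪p - b, a - b⟫ := by
      rw [← inner_neg_left, neg_sub]
    nlinarith [h1]
  have hexp : ‖p - a‖^2 = ‖p - b‖^2 + 2 * ⟪b - p, a - b⟫ + ‖a - b‖^2 := by
    have : p - a = (p - b) + (b - a) := by abel
    rw [this, norm_add_sq_real]
    have e1 : ‖b - a‖ = ‖a - b‖ := by rw [← neg_sub, norm_neg]
    have e2 : ⟪p - b, b - a⟫ = ⟪b - p, a - b⟫ := by
      rw [← inner_neg_neg, neg_sub, neg_sub]
    rw [e1, e2]
  have hab : (0:ℝ) ≤ ‖a - b‖^2 := by positivity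
  constructor
  · nlinarith
  · nlinarith [norm_nonneg (p - b), norm_nonneg (p - a)]
end

section
/- Let σ₀ = 0 < σ₁ < σ₂ < … be reals and {z_k}, {z̄_k}, {z_k*} sequences in a normed space with σ_k z̄_k = σ_{k-1} z̄_{k-1} + (σ_k - σ_{k-1}) z_{k-1}. Suppose ‖z_{k-1} - z_k*‖ ≤ ‖z_{k-1} - z_{k-1}*‖ for all k ≥ 1. Then σ_k ‖z̄_k - z_k*‖ ≤ ∑_{i=1}^k (σ_{i-1} + σ_i) ‖z_{i-1} - z_{i-1}*‖ for all k ≥ 1. -/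
/-!
Write `e k = zbar k - zs k`. The averaging rule gives
`σ (k+1) • e (k+1) = σ k • e k + σ (k+1) • (z k - zs (k+1)) - σ k • (z k - zs k)`,
so by the triangle inequality and the contraction hypothesis
`σ (k+1) ‖e (k+1)‖ ≤ σ k ‖e k‖ + (σ k + σ (k+1)) ‖z k - zs k‖`.
Since `σ 0 = 0`, summing these one-step bounds from `0` gives the claim.
-/

open Finset

theorem mul_norm_sub_le_of_smul_eq_smul_add_smul
    {V : Type*} [NormedAddCommGroup V] [NormedSpace ℝ V]
    {a b : ℝ} (ha : 0 ≤ a) (hb : 0 ≤ b) {x xbar xbar' s s' : V}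
    (hbar : b • xbar' = a • xbar + (b - a) • x) (hcontr : ‖x - s'‖ ≤ ‖x - s‖) :
    b * ‖xbar' - s'‖ ≤ a * ‖xbar - s‖ + (a + b) * ‖x - s‖ := by
  have hdecomp : b • (xbar' - s') = a • (xbar - s) + b • (x - s') - a • (x - s) := by
    rw [smul_sub, hbar]
    module
  calc b * ‖xbar' - s'‖ = ‖a • (xbar - s) + b • (x - s') - a • (x - s)‖ := by
        rw [← hdecomp, norm_smul_of_nonneg hb]
    _ ≤ ‖a • (xbar - s)‖ + ‖b • (x - s')‖ + ‖a • (x - s)‖ := norm_sub_le_of_le (norm_add_le _ _) le_rfl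
    _ = a * ‖xbar - s‖ + b * ‖x - s'‖ + a * ‖x - s‖ := by
        simp only [norm_smul_of_nonneg ha, norm_smul_of_nonneg hb]
    _ ≤ a * ‖xbar - s‖ + (a + b) * ‖x - s‖ := by
        linarith [mul_le_mul_of_nonneg_left hcontr hb]

theorem le_sum_range_of_le_add {u c : ℕ → ℝ} (h0 : u 0 ≤ 0)
    (hstep : ∀ k, u (k + 1) ≤ u k + c k) (n : ℕ) : u n ≤ ∑ i ∈ range n, c i := by
  induction n with
  | zero => simpa using h0
  | succ n ih => linarith [hstep n, sum_range_succ c n]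

theorem accumulative_bound
    {V : Type*} [NormedAddCommGroup V] [NormedSpace ℝ V]
    (σ : ℕ → ℝ) (hσ0 : σ 0 = 0) (hmono : StrictMono σ)
    (z zbar zs : ℕ → V)
    (hbar : ∀ k, σ (k+1) • zbar (k+1) = σ k • zbar k + (σ (k+1) - σ k) • z k)
    (hcontr : ∀ k, ‖z k - zs (k+1)‖ ≤ ‖z k - zs k‖) :
    ∀ k, 1 ≤ k →
      σ k * ‖zbar k - zs k‖ ≤ ∑ i ∈ Finset.range k, (σ i + σ (i+1)) * ‖z i - zs i‖ := by
  have hσ_nonneg : ∀ k, 0 ≤ σ k := fun k => hσ0 ▸ hmono.monotone (Nat.zero_le k)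
  intro k _
  refine le_sum_range_of_le_add (u := fun k => σ k * ‖zbar k - zs k‖)
    (by simp [hσ0]) (fun i => ?_) k
  exact mul_norm_sub_le_of_smul_eq_smul_add_smul (hσ_nonneg i) (hσ_nonneg (i + 1))
    (hbar i) (hcontr i)
end

section
/- Let H₁ ≤ H₂ ≤ … ≤ H_s be positive reals, λ_k > 0, and r_k ≥ 0 satisfy λ_{k+1} H_k r_{k+1} ≥ 1/33 where r_{k+1} = ‖z_{k+1} - ẑ_k‖, and suppose ∑_{k=1}^s r_{k+1}² ≤ 12 R² for some R > 0. Then ∑_{k=1}^s λ_{k+1} ≥ s^{3/2} / (66√3 · H_s · R). -/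
/-!
Each step satisfies `λ_{k+1}⁻¹ ≤ 33 H_s r_{k+1}`, so `∑ λ_{k+1}⁻² ≤ (66√3 H_s R)²`. The
Hölder-type inequality `s³ ≤ (∑ λ⁻²)(∑ λ)²` then gives `s^{3/2} ≤ 66√3 H_s R ∑ λ`; it follows from
two Cauchy–Schwarz steps, `s² ≤ (∑ λ⁻¹)(∑ λ)` and `(∑ λ⁻¹)² ≤ s ∑ λ⁻²`.
-/

open Finset

theorem Finset.card_pow_three_le_sum_inv_sq_mul_sq_sum {ι R : Type*} [Field R] [LinearOrder R]
    [IsStrictOrderedRing R] (s : Finset ι) {a : ι → R} (ha : ∀ i ∈ s, 0 < a i) :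
    (#s : R) ^ 3 ≤ (∑ i ∈ s, (a i)⁻¹ ^ 2) * (∑ i ∈ s, a i) ^ 2 := by
  obtain rfl | hs := s.eq_empty_or_nonempty
  · simp
  have hcard : (0 : R) < #s := by exact_mod_cast hs.card_pos
  have hA : 0 < ∑ i ∈ s, a i := sum_pos ha hs
  have hsedrakyan : (#s : R) ^ 2 ≤ (∑ i ∈ s, (a i)⁻¹) * ∑ i ∈ s, a i := by
    have := sq_sum_div_le_sum_sq_div s (fun _ ↦ (1 : R)) ha
    simp only [sum_const, nsmul_eq_mul, mul_one, one_pow, one_div] at this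
    rwa [div_le_iff₀ hA] at this
  have hpower : (∑ i ∈ s, (a i)⁻¹) ^ 2 ≤ #s * ∑ i ∈ s, (a i)⁻¹ ^ 2 :=
    sq_sum_le_card_mul_sum_sq
  refine le_of_mul_le_mul_left ?_ hcard
  calc (#s : R) * #s ^ 3 = (#s ^ 2) ^ 2 := by ring
    _ ≤ ((∑ i ∈ s, (a i)⁻¹) * ∑ i ∈ s, a i) ^ 2 := by gcongr
    _ = (∑ i ∈ s, (a i)⁻¹) ^ 2 * (∑ i ∈ s, a i) ^ 2 := mul_pow ..
    _ ≤ #s * (∑ i ∈ s, (a i)⁻¹ ^ 2) * (∑ i ∈ s, a i) ^ 2 := by gcongr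
    _ = _ := mul_assoc ..

theorem Real.rpow_three_halves_le_of_pow_three_le_sq {x y : ℝ} (hx : 0 ≤ x) (hy : 0 ≤ y)
    (h : x ^ 3 ≤ y ^ 2) : x ^ ((3 : ℝ) / 2) ≤ y := by
  rw [div_eq_mul_one_div, Real.rpow_mul hx, Real.rpow_ofNat, ← Real.sqrt_eq_rpow]
  exact Real.sqrt_le_iff.mpr ⟨hy, h⟩

theorem stepsize_sum_lower_bound_general
    (s : ℕ) (H lam r : ℕ → ℝ) (R : ℝ) (hR : 0 < R)
    (hHpos : ∀ k, 0 < H k) (hHmono : ∀ k ∈ Finset.Icc 1 s, H k ≤ H s)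
    (hlam : ∀ k, 0 < lam k) (hr : ∀ k, 0 ≤ r k)
    (hlb : ∀ k ∈ Finset.Icc 1 s, (1:ℝ)/33 ≤ lam (k+1) * (H k * r (k+1)))
    (hsum : ∑ k ∈ Finset.Icc 1 s, (r (k+1))^2 ≤ 12 * R^2) :
    (s:ℝ) ^ ((3:ℝ)/2) / (66 * Real.sqrt 3 * H s * R) ≤ ∑ k ∈ Finset.Icc 1 s, lam (k+1) := by
  set C := 66 * Real.sqrt 3 * H s * R
  have hC : 0 < C := by have := hHpos s; positivity
  have hinv (k) (hk : k ∈ Icc 1 s) : (lam (k+1))⁻¹ ≤ 33 * H s * r (k+1) := by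
    rw [inv_le_iff_one_le_mul₀ (hlam _)]
    have hHr : H k * r (k+1) ≤ H s * r (k+1) := mul_le_mul_of_nonneg_right (hHmono k hk) (hr _)
    nlinarith [hlb k hk, hlam (k+1)]
  have hinv_sq : ∑ k ∈ Icc 1 s, (lam (k+1))⁻¹ ^ 2 ≤ C ^ 2 :=
    calc ∑ k ∈ Icc 1 s, (lam (k+1))⁻¹ ^ 2
        ≤ ∑ k ∈ Icc 1 s, (33 * H s) ^ 2 * r (k+1) ^ 2 := by
          refine sum_le_sum fun k hk ↦ ?_
          rw [← mul_pow]
          exact pow_le_pow_left₀ (inv_nonneg.2 (hlam _).le) (hinv k hk) 2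
      _ ≤ (33 * H s) ^ 2 * (12 * R ^ 2) := by rw [← mul_sum]; gcongr
      _ = C ^ 2 := by simp only [C, mul_pow, Real.sq_sqrt (show (0:ℝ) ≤ 3 by norm_num)]; ring
  have hholder := card_pow_three_le_sum_inv_sq_mul_sq_sum (Icc 1 s) (fun k _ ↦ hlam (k+1))
  rw [Nat.card_Icc, Nat.add_sub_cancel] at hholder
  rw [div_le_iff₀ hC]
  refine Real.rpow_three_halves_le_of_pow_three_le_sq s.cast_nonneg
    (mul_nonneg (sum_nonneg fun k _ ↦ (hlam _).le) hC.le) (hholder.trans ?_)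
  rw [mul_pow, mul_comm]
  gcongr

theorem stepsize_sum_lower_bound
    (s : ℕ) (hs : 1 ≤ s) (H lam r : ℕ → ℝ) (R : ℝ) (hR : 0 < R)
    (hHpos : ∀ k, 0 < H k) (hHmono : ∀ k ∈ Finset.Icc 1 s, H k ≤ H s)
    (hlam : ∀ k, 0 < lam k) (hr : ∀ k, 0 ≤ r k)
    (hlb : ∀ k ∈ Finset.Icc 1 s, (1:ℝ)/33 ≤ lam (k+1) * (H k * r (k+1)))
    (hsum : ∑ k ∈ Finset.Icc 1 s, (r (k+1))^2 ≤ 12 * R^2) :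
    (s:ℝ) ^ ((3:ℝ)/2) / (66 * Real.sqrt 3 * H s * R) ≤ ∑ k ∈ Finset.Icc 1 s, lam (k+1) :=
  stepsize_sum_lower_bound_general s H lam r R hR hHpos hHmono hlam hr hlb hsum
end
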